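/- Let Γ₀ ⊆ Γ be two full-rank lattices in E. If their Dirichlet domains coincide, i.e. {H ∈ E : ‖H‖ < ‖H + γ‖ for every nonzero γ ∈ Γ} = {H ∈ E : ‖H‖ < ‖H + γ‖ for every nonzero γ ∈ Γ₀}, then Γ = Γ₀. -/

import Mathlib

/-!
If `γ ∈ Γ \ Γ₀`, let `g` be a shortest vector of the coset `γ + Γ₀`. Then `‖g‖ ≤ ‖g + δ‖` for all
`δ ∈ Γ₀`, so `g` lies in the closure of the Dirichlet domain of `Γ₀` and `(3/4) • g` in the domain
itself. But `-g` is a nonzero element of `Γ` with `‖(3/4) • g - g‖ < ‖(3/4) • g‖`, so `(3/4) • g`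
is not in the Dirichlet domain of `Γ`.
-/

def dirichletDomain {E : Type*} [NormedAddCommGroup E] (Γ : AddSubgroup E) : Set E :=
  {H : E | ∀ γ ∈ Γ, γ ≠ 0 → ‖H‖ < ‖H + γ‖}

theorem IsClosed.exists_isMinOn_norm_add {E : Type*} [NormedAddCommGroup E] [ProperSpace E]
    {s : Set E} (hs : IsClosed s) (hne : s.Nonempty) (x : E) :
    ∃ δ ∈ s, IsMinOn (fun δ => ‖x + δ‖) s δ := by
  obtain ⟨δ, hδ, hdist⟩ := hs.exists_infDist_eq_dist hne (-x)
  refine ⟨δ, hδ, fun δ' hδ' => ?_⟩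
  have hnorm : ∀ y, dist (-x) y = ‖x + y‖ := fun y => by
    rw [dist_eq_norm, ← norm_neg, neg_sub_left, neg_neg, add_comm]
  have h := Metric.infDist_le_dist_of_mem (x := -x) hδ'
  rwa [hdist, hnorm, hnorm] at h

section InnerProductSpace

variable {E : Type*} [NormedAddCommGroup E] [InnerProductSpace ℝ E]

theorem smul_mem_dirichletDomain {Γ : AddSubgroup E} {x : E} (hx : ∀ δ ∈ Γ, ‖x‖ ≤ ‖x + δ‖)
    {t : ℝ} (ht₀ : 0 ≤ t) (ht₁ : t < 1) : t • x ∈ dirichletDomain Γ := by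
  intro δ hδ hδ₀
  have hpos : 0 < ‖δ‖ ^ 2 := by positivity
  have hxδ : 0 ≤ 2 * inner ℝ x δ + ‖δ‖ ^ 2 := by
    have h := pow_le_pow_left₀ (norm_nonneg x) (hx δ hδ) 2
    rw [norm_add_sq_real] at h
    linarith
  -- `‖t • x + δ‖² - ‖t • x‖² = t (2 ⟪x, δ⟫ + ‖δ‖²) + (1 - t) ‖δ‖²`
  have hsq : ‖t • x‖ ^ 2 < ‖t • x + δ‖ ^ 2 := by
    rw [norm_add_sq_real, real_inner_smul_left]
    nlinarith [mul_nonneg ht₀ hxδ]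
  exact lt_of_pow_lt_pow_left₀ 2 (norm_nonneg _) hsq

end InnerProductSpace

theorem smul_notMem_dirichletDomain {E : Type*} [NormedAddCommGroup E] [NormedSpace ℝ E]
    {Γ : AddSubgroup E} {g : E} (hg : g ∈ Γ) (hg₀ : g ≠ 0) {t : ℝ} (ht : 1 / 2 ≤ t) :
    t • g ∉ dirichletDomain Γ := fun hmem => by
  have hlt := hmem (-g) (Γ.neg_mem hg) (neg_ne_zero.mpr hg₀)
  have hsub : t • g + -g = (t - 1) • g := by module
  rw [hsub, norm_smul, norm_smul, Real.norm_eq_abs, Real.norm_eq_abs,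
    abs_of_nonneg (by linarith : (0 : ℝ) ≤ t)] at hlt
  have habs : |t - 1| ≤ t := abs_le.mpr ⟨by linarith, by linarith⟩
  nlinarith [norm_nonneg g]

theorem lattice_eq_of_dirichlet_eq_general {E : Type*}
    [NormedAddCommGroup E] [InnerProductSpace ℝ E] [FiniteDimensional ℝ E]
    (Γ₀ Γ : AddSubgroup E) [DiscreteTopology Γ₀]
    (hle : Γ₀ ≤ Γ)
    (hD : {H : E | ∀ γ ∈ Γ, γ ≠ 0 → ‖H‖ < ‖H + γ‖} =
          {H : E | ∀ γ ∈ Γ₀, γ ≠ 0 → ‖H‖ < ‖H + γ‖}) :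
    Γ = Γ₀ := by
  refine le_antisymm (fun γ hγ => ?_) hle
  by_contra hγ₀
  obtain ⟨δ₀, hδ₀, hmin⟩ :=
    (AddSubgroup.isClosed_of_discrete (H := Γ₀)).exists_isMinOn_norm_add ⟨0, Γ₀.zero_mem⟩ γ
  set g := γ + δ₀
  have hgΓ : g ∈ Γ := Γ.add_mem hγ (hle hδ₀)
  have hg₀ : g ∉ Γ₀ := fun h => hγ₀ (by simpa [g] using Γ₀.sub_mem h hδ₀)
  have hshort : ∀ δ ∈ Γ₀, ‖g‖ ≤ ‖g + δ‖ := fun δ hδ => by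
    rw [add_assoc]
    exact hmin (Γ₀.add_mem hδ₀ hδ)
  have hmem : (3 / 4 : ℝ) • g ∈ dirichletDomain Γ := by
    rw [dirichletDomain, hD]
    exact smul_mem_dirichletDomain hshort (by norm_num) (by norm_num)
  exact smul_notMem_dirichletDomain hgΓ (fun h => hg₀ (h ▸ Γ₀.zero_mem)) (by norm_num) hmem

/-- If two nested full-rank lattices `Γ₀ ⊆ Γ` in `E` have the same Dirichlet
domain, then they are equal. -/
theorem lattice_eq_of_dirichlet_eq {E : Type*}
    [NormedAddCommGroup E] [InnerProductSpace ℝ E] [FiniteDimensional ℝ E]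
    (Γ₀ Γ : AddSubgroup E) [DiscreteTopology Γ₀] [DiscreteTopology Γ]
    (hspan₀ : Submodule.span ℝ (Γ₀ : Set E) = ⊤)
    (hspan : Submodule.span ℝ (Γ : Set E) = ⊤)
    (hle : Γ₀ ≤ Γ)
    (hD : {H : E | ∀ γ ∈ Γ, γ ≠ 0 → ‖H‖ < ‖H + γ‖} =
          {H : E | ∀ γ ∈ Γ₀, γ ≠ 0 → ‖H‖ < ‖H + γ‖}) :
    Γ = Γ₀ :=
  lattice_eq_of_dirichlet_eq_general Γ₀ Γ hle hD
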